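/- arXiv:1606.08323 — 3 statements merged into one kernel-verified Lean document; each statement's English description precedes it below -/
import Mathlib

section
/- Let j < k be natural numbers, and on a probability space let e_j : Ω → ℝⁿ, v_{2,j} : Ω → ℝ^l, v_{2,k} : Ω → ℝ^l and v'_ℓ : Ω → ℝⁿ (for ℓ = j, …, k−1) be zero-mean square-integrable random vectors. Let Φ_ℓ (n×n, for ℓ = j,…,k−1), Γ_j, Γ_k (p×l), C₂ (l×n), G₂ (n×p₂), M₂ (p₂×l), Ā (n×n) be real matrices, let P be a symmetric positive semidefinite n×n matrix and R₂ a symmetric positive definite l×l matrix. Define Φ_{k|i} = Φ_{k−1}⋯Φ_i for i ≤ k−1 and Φ_{k|k} = I, and set e_k = Φ_{k|j} e_j + Σ_{ℓ=j}^{k−1} Φ_{k|ℓ+1} v'_ℓ. Define R̃* = C₂ P C₂ᵀ + R₂ − C₂ G₂ M₂ R₂ − R₂ M₂ᵀ G₂ᵀ C₂ᵀ, assume Γ_j R̃* Γ_jᵀ is invertible, set the optimal gain L̃ = (P C₂ᵀ − G₂ M₂ R₂) Γ_jᵀ (Γ_j R̃* Γ_jᵀ)⁻¹, and assume Φ_j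 = Ā (I − L̃ Γ_j C₂). Assume the cross-covariance conditions: E[v'_ℓ e_jᵀ] = 0 and E[v'_ℓ v_{2,j}ᵀ] = 0 for all ℓ with j < ℓ ≤ k−1; E[v'_j e_jᵀ] = Ā L̃ Γ_j R₂ M₂ᵀ G₂ᵀ; E[v'_j v_{2,j}ᵀ] = −Ā L̃ Γ_j R₂; E[e_j e_jᵀ] = P; E[v_{2,j} v_{2,j}ᵀ] = R₂; E[e_j v_{2,j}ᵀ] = −G₂ M₂ R₂; E[v_{2,k} e_jᵀ] = 0; and E[v_{2,k} v_{2,j}ᵀ] = 0. Define the generalized innovations ν_j = Γ_j (C₂ e_j + v_{2,j}) and ν_k = Γ_k (C₂' e_k + v_{2,k}) for any l×n matrix C₂'. Then the cross-covariance vanishes: E[ν_k ν_jᵀ] = 0 (the p×p zero matrix). This is the whiteness property of the generalized innovation of the optimal input-and-state filter (Theorem 1, off-diagonal part). -/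
/-!
With `w = C₂ e_j + v_{2,j}`, bilinearity of the cross-covariance gives
`E[ν_k ν_jᵀ] = Γ_k C₂' Φ_{k|j+1} (Φ_j E[e_j wᵀ] + E[v'_j wᵀ]) Γ_jᵀ`, because `v_{2,k}` and the
`v'_ℓ` with `ℓ > j` are uncorrelated with `w`. Substituting `Φ_j = Ā (I − L̃ Γ_j C₂)` turns the
bracket times `Γ_jᵀ` into `Ā (E[e_j wᵀ] Γ_jᵀ − L̃ Γ_j R̃* Γ_jᵀ)`, and the optimal gain is exactly
the choice of `L̃` that makes this vanish.
-/

open MeasureTheory Matrix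
open scoped ProbabilityTheory

/-- Cross-covariance matrix `E[X Yᵀ]` of two (zero-mean) random vectors. -/
noncomputable def crossCov {Ω : Type*} [MeasureSpace Ω]
    {a b : ℕ} (X : Ω → Fin a → ℝ) (Y : Ω → Fin b → ℝ) : Matrix (Fin a) (Fin b) ℝ :=
  Matrix.of fun i j => ∫ ω, X ω i * Y ω j

/-- `chain Φ i k = Φ_{k-1} ⋯ Φ_i` (equal to `1` when `k ≤ i`), i.e. the state-transition
matrix `Φ_{k|i}` of the error system. -/
def chain {n : ℕ} (Φ : ℕ → Matrix (Fin n) (Fin n) ℝ) (i : ℕ) : ℕ → Matrix (Fin n) (Fin n) ℝ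
  | 0 => 1
  | m + 1 => if i ≤ m then Φ m * chain Φ i m else 1

lemma chain_self {n : ℕ} (Φ : ℕ → Matrix (Fin n) (Fin n) ℝ) (i : ℕ) : chain Φ i i = 1 := by
  cases i <;> simp [chain]

lemma chain_of_lt {n : ℕ} (Φ : ℕ → Matrix (Fin n) (Fin n) ℝ) {i k : ℕ} (h : i < k) :
    chain Φ i k = chain Φ (i + 1) k * Φ i := by
  induction k with
  | zero => omega
  | succ m ih =>
    rcases (Nat.lt_succ_iff.mp h).eq_or_lt with rfl | him
    · simp [chain, chain_self]
    · simp [chain, him.le, Nat.succ_le_of_lt him, ih him, Matrix.mul_assoc]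

section CrossCov

variable {Ω : Type*} [MeasureSpace Ω] {a b c : ℕ}

lemma MeasureTheory.MemLp.mulVec {X : Ω → Fin c → ℝ} (hX : MemLp X 2 ℙ)
    (A : Matrix (Fin a) (Fin c) ℝ) :
    MemLp (fun ω => A *ᵥ X ω) 2 ℙ :=
  hX.continuousLinearMap_comp (Matrix.toLin' A).toContinuousLinearMap

lemma MeasureTheory.MemLp.integrable_mul_apply {X : Ω → Fin a → ℝ} {Y : Ω → Fin b → ℝ}
    (hX : MemLp X 2 ℙ) (hY : MemLp Y 2 ℙ) (i : Fin a) (j : Fin b) :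
    Integrable (fun ω => X ω i * Y ω j) ℙ :=
  (hX.eval i).integrable_mul (hY.eval j)

lemma crossCov_mulVec_left {X : Ω → Fin c → ℝ} {Y : Ω → Fin b → ℝ}
    (hX : MemLp X 2 ℙ) (hY : MemLp Y 2 ℙ) (A : Matrix (Fin a) (Fin c) ℝ) :
    crossCov (fun ω => A *ᵥ X ω) Y = A * crossCov X Y := by
  ext i j
  simp only [crossCov, of_apply, mul_apply, mulVec, dotProduct, Finset.sum_mul, mul_assoc]
  rw [integral_finsetSum _ fun m _ => (hX.integrable_mul_apply hY m j).const_mul (A i m)]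
  simp only [integral_const_mul]

lemma crossCov_mulVec_right {X : Ω → Fin a → ℝ} {Y : Ω → Fin c → ℝ}
    (hX : MemLp X 2 ℙ) (hY : MemLp Y 2 ℙ) (B : Matrix (Fin b) (Fin c) ℝ) :
    crossCov X (fun ω => B *ᵥ Y ω) = crossCov X Y * Bᵀ := by
  ext i j
  simp only [crossCov, of_apply, mul_apply, transpose_apply, mulVec, dotProduct, Finset.mul_sum,
    mul_comm (B _ _), ← mul_assoc]
  rw [integral_finsetSum _ fun m _ => (hX.integrable_mul_apply hY i m).mul_const (B j m)]
  simp only [integral_mul_const]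

lemma crossCov_add_left {X X' : Ω → Fin a → ℝ} {Y : Ω → Fin b → ℝ}
    (hX : MemLp X 2 ℙ) (hX' : MemLp X' 2 ℙ) (hY : MemLp Y 2 ℙ) :
    crossCov (fun ω => X ω + X' ω) Y = crossCov X Y + crossCov X' Y := by
  ext i j
  simp only [crossCov, of_apply, Pi.add_apply, add_mul]
  exact integral_add (hX.integrable_mul_apply hY i j) (hX'.integrable_mul_apply hY i j)

lemma crossCov_add_right {X : Ω → Fin a → ℝ} {Y Y' : Ω → Fin b → ℝ}
    (hX : MemLp X 2 ℙ) (hY : MemLp Y 2 ℙ) (hY' : MemLp Y' 2 ℙ) :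
    crossCov X (fun ω => Y ω + Y' ω) = crossCov X Y + crossCov X Y' := by
  ext i j
  simp only [crossCov, of_apply, Pi.add_apply, mul_add]
  exact integral_add (hX.integrable_mul_apply hY i j) (hX.integrable_mul_apply hY' i j)

lemma crossCov_sum_left {ι : Type*} {s : Finset ι} {X : ι → Ω → Fin a → ℝ} {Y : Ω → Fin b → ℝ}
    (hX : ∀ ℓ ∈ s, MemLp (X ℓ) 2 ℙ) (hY : MemLp Y 2 ℙ) :
    crossCov (fun ω => ∑ ℓ ∈ s, X ℓ ω) Y = ∑ ℓ ∈ s, crossCov (X ℓ) Y := by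
  ext i j
  simp only [crossCov, of_apply, Finset.sum_apply, Matrix.sum_apply, Finset.sum_mul]
  exact integral_finsetSum _ fun ℓ hℓ => (hX ℓ hℓ).integrable_mul_apply hY i j

lemma crossCov_mulVec_add_right {X : Ω → Fin a → ℝ} {e : Ω → Fin c → ℝ} {v : Ω → Fin b → ℝ}
    (hX : MemLp X 2 ℙ) (he : MemLp e 2 ℙ) (hv : MemLp v 2 ℙ) (C : Matrix (Fin b) (Fin c) ℝ) :
    crossCov X (fun ω => C *ᵥ e ω + v ω) = crossCov X e * Cᵀ + crossCov X v := by
  rw [crossCov_add_right hX (he.mulVec C) hv, crossCov_mulVec_right hX he]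

lemma crossCov_propagated_left {n : ℕ} (Φ : ℕ → Matrix (Fin n) (Fin n) ℝ) {j k : ℕ} (hjk : j < k)
    {e : Ω → Fin n → ℝ} {v' : ℕ → Ω → Fin n → ℝ} {Y : Ω → Fin b → ℝ}
    (he : MemLp e 2 ℙ) (hv' : ∀ ℓ ∈ Finset.Ico j k, MemLp (v' ℓ) 2 ℙ) (hY : MemLp Y 2 ℙ)
    (hv'Y : ∀ ℓ, j < ℓ → ℓ < k → crossCov (v' ℓ) Y = 0) :
    crossCov (fun ω => chain Φ j k *ᵥ e ω + ∑ ℓ ∈ Finset.Ico j k, chain Φ (ℓ + 1) k *ᵥ v' ℓ ω) Y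
      = chain Φ (j + 1) k * (Φ j * crossCov e Y + crossCov (v' j) Y) := by
  have hv'Φ : ∀ ℓ ∈ Finset.Ico j k, MemLp (fun ω => chain Φ (ℓ + 1) k *ᵥ v' ℓ ω) 2 ℙ :=
    fun ℓ hℓ => (hv' ℓ hℓ).mulVec _
  have hj : j ∈ Finset.Ico j k := Finset.mem_Ico.2 ⟨le_rfl, hjk⟩
  rw [crossCov_add_left (he.mulVec _) (memLp_finsetSum _ hv'Φ) hY, crossCov_mulVec_left he hY,
    crossCov_sum_left hv'Φ hY, Finset.sum_eq_single_of_mem j hj ?_,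
    crossCov_mulVec_left (hv' j hj) hY, chain_of_lt Φ hjk, Matrix.mul_assoc, Matrix.mul_add]
  intro ℓ hℓ hne
  obtain ⟨hjℓ, hℓk⟩ := Finset.mem_Ico.1 hℓ
  rw [crossCov_mulVec_left (hv' ℓ hℓ) hY, hv'Y ℓ (hjℓ.lt_of_ne' hne) hℓk, Matrix.mul_zero]

end CrossCov

lemma optimalGain_orthogonal {R m n p q : Type*} [CommRing R] [Fintype m] [Fintype n] [Fintype p]
    [Fintype q] [DecidableEq n] (Abar P : Matrix n n R) (R₂ : Matrix m m R) (C₂ : Matrix m n R)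
    (G₂ : Matrix n q R) (M₂ : Matrix q m R) (Γ : Matrix p m R) (L : Matrix n p R)
    (hL : L * (Γ * (C₂ * P * C₂ᵀ + R₂ - C₂ * G₂ * M₂ * R₂ - R₂ * M₂ᵀ * G₂ᵀ * C₂ᵀ) * Γᵀ)
      = (P * C₂ᵀ - G₂ * M₂ * R₂) * Γᵀ) :
    (Abar * (1 - L * Γ * C₂) * (P * C₂ᵀ - G₂ * M₂ * R₂)
      + (Abar * L * Γ * R₂ * M₂ᵀ * G₂ᵀ * C₂ᵀ - Abar * L * Γ * R₂)) * Γᵀ = 0 := by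
  calc _ = Abar * ((P * C₂ᵀ - G₂ * M₂ * R₂) * Γᵀ
          - L * (Γ * (C₂ * P * C₂ᵀ + R₂ - C₂ * G₂ * M₂ * R₂ - R₂ * M₂ᵀ * G₂ᵀ * C₂ᵀ) * Γᵀ)) := by
        simp only [Matrix.mul_add, Matrix.add_mul, Matrix.mul_sub, Matrix.sub_mul, Matrix.mul_one,
          Matrix.mul_assoc]
        abel
    _ = 0 := by rw [hL, sub_self, Matrix.mul_zero]

theorem generalized_innovation_whiteness_general
    {Ω : Type*} [MeasureSpace Ω]
    {n l p p₂ : ℕ} (j k : ℕ) (hjk : j < k)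
    (ej : Ω → Fin n → ℝ) (v2j v2k : Ω → Fin l → ℝ) (v' : ℕ → Ω → Fin n → ℝ)
    (hej_meas : ∀ i, MemLp (fun ω => ej ω i) 2 ℙ)
    (hv2j_meas : ∀ i, MemLp (fun ω => v2j ω i) 2 ℙ)
    (hv2k_meas : ∀ i, MemLp (fun ω => v2k ω i) 2 ℙ)
    (hv'_meas : ∀ ℓ, j ≤ ℓ → ℓ < k → ∀ i, MemLp (fun ω => v' ℓ ω i) 2 ℙ)
    (Φ : ℕ → Matrix (Fin n) (Fin n) ℝ)
    (Γj Γk : Matrix (Fin p) (Fin l) ℝ)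
    (C₂ C₂' : Matrix (Fin l) (Fin n) ℝ)
    (G₂ : Matrix (Fin n) (Fin p₂) ℝ) (M₂ : Matrix (Fin p₂) (Fin l) ℝ)
    (Abar : Matrix (Fin n) (Fin n) ℝ)
    (P : Matrix (Fin n) (Fin n) ℝ)
    (R₂ : Matrix (Fin l) (Fin l) ℝ)
    (ek : Ω → Fin n → ℝ)
    (hek : ek = fun ω => chain Φ j k *ᵥ ej ω + ∑ ℓ ∈ Finset.Ico j k, chain Φ (ℓ + 1) k *ᵥ v' ℓ ω)
    (Rstar : Matrix (Fin l) (Fin l) ℝ)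
    (hRstar : Rstar = C₂ * P * C₂ᵀ + R₂ - C₂ * G₂ * M₂ * R₂ - R₂ * M₂ᵀ * G₂ᵀ * C₂ᵀ)
    (hinv : IsUnit (Γj * Rstar * Γjᵀ))
    (L : Matrix (Fin n) (Fin p) ℝ)
    (hL : L = (P * C₂ᵀ - G₂ * M₂ * R₂) * Γjᵀ * (Γj * Rstar * Γjᵀ)⁻¹)
    (hΦj : Φ j = Abar * (1 - L * Γj * C₂))
    (hv'ej : ∀ ℓ, j < ℓ → ℓ < k → crossCov (v' ℓ) ej = 0)
    (hv'v2j : ∀ ℓ, j < ℓ → ℓ < k → crossCov (v' ℓ) v2j = 0)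
    (hv'jej : crossCov (v' j) ej = Abar * L * Γj * R₂ * M₂ᵀ * G₂ᵀ)
    (hv'jv2j : crossCov (v' j) v2j = -(Abar * L * Γj * R₂))
    (hejej : crossCov ej ej = P)
    (hejv2j : crossCov ej v2j = -(G₂ * M₂ * R₂))
    (hv2kej : crossCov v2k ej = 0)
    (hv2kv2j : crossCov v2k v2j = 0)
    (νj νk : Ω → Fin p → ℝ)
    (hνj : νj = fun ω => Γj *ᵥ (C₂ *ᵥ ej ω + v2j ω))
    (hνk : νk = fun ω => Γk *ᵥ (C₂' *ᵥ ek ω + v2k ω)) :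
    crossCov νk νj = 0 := by
  have hej := memLp_pi_iff.2 hej_meas
  have hv2j := memLp_pi_iff.2 hv2j_meas
  have hv2k := memLp_pi_iff.2 hv2k_meas
  have hv' : ∀ ℓ ∈ Finset.Ico j k, MemLp (v' ℓ) 2 ℙ := fun ℓ hℓ =>
    memLp_pi_iff.2 (hv'_meas ℓ (Finset.mem_Ico.1 hℓ).1 (Finset.mem_Ico.1 hℓ).2)
  have hek_memLp : MemLp ek 2 ℙ :=
    hek ▸ (hej.mulVec _).add (memLp_finsetSum _ fun ℓ hℓ => (hv' ℓ hℓ).mulVec _)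
  subst hνj hνk
  set w : Ω → Fin l → ℝ := fun ω => C₂ *ᵥ ej ω + v2j ω
  have hw : MemLp w 2 ℙ := (hej.mulVec C₂).add hv2j
  have hz : MemLp (fun ω => C₂' *ᵥ ek ω + v2k ω) 2 ℙ := (hek_memLp.mulVec C₂').add hv2k
  have hekw : crossCov ek w = chain Φ (j + 1) k * (Φ j * crossCov ej w + crossCov (v' j) w) := by
    refine hek ▸ crossCov_propagated_left Φ hjk hej hv' hw fun ℓ hjℓ hℓk => ?_
    rw [crossCov_mulVec_add_right (hv' ℓ (Finset.mem_Ico.2 ⟨hjℓ.le, hℓk⟩)) hej hv2j,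
      hv'ej ℓ hjℓ hℓk, hv'v2j ℓ hjℓ hℓk, Matrix.zero_mul, add_zero]
  have hv2kw : crossCov v2k w = 0 := by
    rw [crossCov_mulVec_add_right hv2k hej hv2j, hv2kej, hv2kv2j, Matrix.zero_mul, add_zero]
  have hgain : L * (Γj * Rstar * Γjᵀ) = (P * C₂ᵀ - G₂ * M₂ * R₂) * Γjᵀ := by
    rw [hL, nonsing_inv_mul_cancel_right _ _ ((isUnit_iff_isUnit_det _).1 hinv)]
  have hv'j := hv' j (Finset.mem_Ico.2 ⟨le_rfl, hjk⟩)
  calc _ = Γk * (C₂' * (crossCov ek w * Γjᵀ)) := by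
        rw [crossCov_mulVec_left hz (hw.mulVec Γj), crossCov_mulVec_right hz hw,
          crossCov_add_left (hek_memLp.mulVec C₂') hv2k hw, crossCov_mulVec_left hek_memLp hw,
          hv2kw, add_zero, Matrix.mul_assoc]
    _ = Γk * C₂' * chain Φ (j + 1) k * ((Φ j * crossCov ej w + crossCov (v' j) w) * Γjᵀ) := by
        rw [hekw]; simp only [Matrix.mul_assoc]
    _ = 0 := by
        rw [hΦj, crossCov_mulVec_add_right hej hej hv2j, crossCov_mulVec_add_right hv'j hej hv2j,
          hejej, hejv2j, hv'jej, hv'jv2j, ← sub_eq_add_neg, ← sub_eq_add_neg,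
          optimalGain_orthogonal _ _ _ _ _ _ _ _ (hRstar ▸ hgain), Matrix.mul_zero]

/-- **Theorem 1 (off-diagonal part): whiteness of the generalized innovation** of the optimal
input-and-state filter: with the optimal gain `L̃ = (P C₂ᵀ − G₂ M₂ R₂) Γ_jᵀ (Γ_j R̃* Γ_jᵀ)⁻¹`
and `Φ_j = Ā (I − L̃ Γ_j C₂)`, the cross-covariance `E[ν_k ν_jᵀ]` of the generalized
innovations `ν_j = Γ_j (C₂ e_j + v_{2,j})`, `ν_k = Γ_k (C₂' e_k + v_{2,k})` vanishes for
`j < k`. -/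
theorem generalized_innovation_whiteness
    {Ω : Type*} [MeasureSpace Ω] [IsProbabilityMeasure (ℙ : Measure Ω)]
    {n l p p₂ : ℕ} (j k : ℕ) (hjk : j < k)
    (ej : Ω → Fin n → ℝ) (v2j v2k : Ω → Fin l → ℝ) (v' : ℕ → Ω → Fin n → ℝ)
    (hej_meas : ∀ i, MemLp (fun ω => ej ω i) 2 ℙ)
    (hv2j_meas : ∀ i, MemLp (fun ω => v2j ω i) 2 ℙ)
    (hv2k_meas : ∀ i, MemLp (fun ω => v2k ω i) 2 ℙ)
    (hv'_meas : ∀ ℓ, j ≤ ℓ → ℓ < k → ∀ i, MemLp (fun ω => v' ℓ ω i) 2 ℙ)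
    (hej_mean : ∀ i, ∫ ω, ej ω i = 0)
    (hv2j_mean : ∀ i, ∫ ω, v2j ω i = 0)
    (hv2k_mean : ∀ i, ∫ ω, v2k ω i = 0)
    (hv'_mean : ∀ ℓ, j ≤ ℓ → ℓ < k → ∀ i, ∫ ω, v' ℓ ω i = 0)
    (Φ : ℕ → Matrix (Fin n) (Fin n) ℝ)
    (Γj Γk : Matrix (Fin p) (Fin l) ℝ)
    (C₂ C₂' : Matrix (Fin l) (Fin n) ℝ)
    (G₂ : Matrix (Fin n) (Fin p₂) ℝ) (M₂ : Matrix (Fin p₂) (Fin l) ℝ)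
    (Abar : Matrix (Fin n) (Fin n) ℝ)
    (P : Matrix (Fin n) (Fin n) ℝ) (hP : P.PosSemidef)
    (R₂ : Matrix (Fin l) (Fin l) ℝ) (hR₂ : R₂.PosDef)
    (ek : Ω → Fin n → ℝ)
    (hek : ek = fun ω => chain Φ j k *ᵥ ej ω + ∑ ℓ ∈ Finset.Ico j k, chain Φ (ℓ + 1) k *ᵥ v' ℓ ω)
    (Rstar : Matrix (Fin l) (Fin l) ℝ)
    (hRstar : Rstar = C₂ * P * C₂ᵀ + R₂ - C₂ * G₂ * M₂ * R₂ - R₂ * M₂ᵀ * G₂ᵀ * C₂ᵀ)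
    (hinv : IsUnit (Γj * Rstar * Γjᵀ))
    (L : Matrix (Fin n) (Fin p) ℝ)
    (hL : L = (P * C₂ᵀ - G₂ * M₂ * R₂) * Γjᵀ * (Γj * Rstar * Γjᵀ)⁻¹)
    (hΦj : Φ j = Abar * (1 - L * Γj * C₂))
    (hv'ej : ∀ ℓ, j < ℓ → ℓ < k → crossCov (v' ℓ) ej = 0)
    (hv'v2j : ∀ ℓ, j < ℓ → ℓ < k → crossCov (v' ℓ) v2j = 0)
    (hv'jej : crossCov (v' j) ej = Abar * L * Γj * R₂ * M₂ᵀ * G₂ᵀ)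
    (hv'jv2j : crossCov (v' j) v2j = -(Abar * L * Γj * R₂))
    (hejej : crossCov ej ej = P)
    (hv2jv2j : crossCov v2j v2j = R₂)
    (hejv2j : crossCov ej v2j = -(G₂ * M₂ * R₂))
    (hv2kej : crossCov v2k ej = 0)
    (hv2kv2j : crossCov v2k v2j = 0)
    (νj νk : Ω → Fin p → ℝ)
    (hνj : νj = fun ω => Γj *ᵥ (C₂ *ᵥ ej ω + v2j ω))
    (hνk : νk = fun ω => Γk *ᵥ (C₂' *ᵥ ek ω + v2k ω)) :
    crossCov νk νj = 0 :=
  generalized_innovation_whiteness_general j k hjk ej v2j v2k v' hej_meas hv2j_meas hv2k_meas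
    hv'_meas Φ Γj Γk C₂ C₂' G₂ M₂ Abar P R₂ ek hek Rstar hRstar hinv L hL hΦj hv'ej hv'v2j hv'jej
    hv'jv2j hejej hejv2j hv2kej hv2kv2j νj νk hνj hνk
end

section
/- Fix a finite nonempty model set Q and strictly positive prior probabilities μ₀ : Q → ℝ with Σ_{q∈Q} μ₀(q) = 1, and per-step divergence values D_ℓ : Q → ℝ for ℓ = 1, 2, …. Define the geometric-mean model probabilities μ̄_k(q) = μ₀(q) exp(−Σ_{ℓ=1}^k D_ℓ(q)) / Σ_{q'∈Q} μ₀(q') exp(−Σ_{ℓ=1}^k D_ℓ(q')). Suppose there exist q ∈ Q, T ∈ ℕ and ε > 0 such that D_ℓ(q) + ε ≤ D_ℓ(q') for every q' ∈ Q with q' ≠ q and every ℓ ≥ T. Then the static multiple-model filter is mean convergent to q: μ̄_k(q) → 1 as k → ∞, and μ̄_k(q') → 0 for every q' ≠ q, with the ratios μ̄_k(q')/μ̄_k(q) decaying exponentially. (Theorem: Mean Convergence (Static), with D_ℓ(q') the KL divergence of model q' from the true model at step ℓ.) -/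
open Finset Filter Topology

variable {Q : Type*} [Fintype Q]

/-- Geometric-mean model probabilities of the static multiple-model filter:
`μ̄_k(q) = μ₀(q) exp(−Σ_{ℓ=1}^k D_ℓ(q)) / Σ_{q'} μ₀(q') exp(−Σ_{ℓ=1}^k D_ℓ(q'))`. -/
noncomputable def geoMeanProb (μ₀ : Q → ℝ) (D : ℕ → Q → ℝ) (k : ℕ) (q : Q) : ℝ :=
  μ₀ q * Real.exp (-∑ ℓ ∈ Finset.Icc 1 k, D ℓ q) /
    ∑ q' : Q, μ₀ q' * Real.exp (-∑ ℓ ∈ Finset.Icc 1 k, D ℓ q')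

/-- **Theorem (Mean Convergence (Static)).** If some model `q` has per-step divergence
eventually smaller (by a margin `ε`) than every other model's, then the static
multiple-model filter is mean convergent to `q`: `μ̄_k(q) → 1`, `μ̄_k(q') → 0` for `q' ≠ q`,
and the ratios `μ̄_k(q')/μ̄_k(q)` decay exponentially. -/
theorem mean_convergence_static [Nonempty Q]
    (μ₀ : Q → ℝ) (hμ₀ : ∀ q, 0 < μ₀ q) (hsum : ∑ q : Q, μ₀ q = 1)
    (D : ℕ → Q → ℝ) (q : Q) (T : ℕ) (ε : ℝ) (hε : 0 < ε)
    (hsep : ∀ q' : Q, q' ≠ q → ∀ ℓ, T ≤ ℓ → D ℓ q + ε ≤ D ℓ q') :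
    Tendsto (fun k => geoMeanProb μ₀ D k q) atTop (𝓝 1) ∧
    (∀ q' : Q, q' ≠ q → Tendsto (fun k => geoMeanProb μ₀ D k q') atTop (𝓝 0)) ∧
    (∀ q' : Q, q' ≠ q → ∃ C : ℝ, 0 < C ∧ ∀ k : ℕ,
      geoMeanProb μ₀ D k q' / geoMeanProb μ₀ D k q ≤ C * Real.exp (-ε * k)) := by
  classical
  set S : ℕ → Q → ℝ := fun k q' => ∑ ℓ ∈ Finset.Icc 1 k, D ℓ q' with hS
  set N : ℕ → Q → ℝ := fun k q' => μ₀ q' * Real.exp (-S k q') with hN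
  have hNpos : ∀ k q', 0 < N k q' := fun k q' => mul_pos (hμ₀ q') (Real.exp_pos _)
  have hDen : ∀ k, 0 < ∑ q' : Q, N k q' := fun k =>
    Finset.sum_pos (fun q' _ => hNpos k q') Finset.univ_nonempty
  have hgeo : ∀ k q', geoMeanProb μ₀ D k q' = N k q' / ∑ q'' : Q, N k q'' := fun k q' => rfl
  set r : ℕ → Q → ℝ := fun k q' => N k q' / N k q with hr
  -- constant for each q'
  set C : Q → ℝ := fun q' =>
    μ₀ q' / μ₀ q * Real.exp (∑ ℓ ∈ Finset.Icc 1 T, max (D ℓ q - D ℓ q' + ε) 0) with hC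
  have hCpos : ∀ q', 0 < C q' := fun q' =>
    mul_pos (div_pos (hμ₀ q') (hμ₀ q)) (Real.exp_pos _)
  -- key exponential bound on ratios
  have key : ∀ q', q' ≠ q → ∀ k : ℕ, r k q' ≤ C q' * Real.exp (-ε * k) := by
    intro q' hq' k
    have hSle : S k q - S k q' ≤ (∑ ℓ ∈ Finset.Icc 1 T, max (D ℓ q - D ℓ q' + ε) 0) - ε * k := by
      have h1 : ∑ ℓ ∈ Finset.Icc 1 k, (D ℓ q - D ℓ q' + ε)
          ≤ ∑ ℓ ∈ Finset.Icc 1 T, max (D ℓ q - D ℓ q' + ε) 0 := by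
        calc ∑ ℓ ∈ Finset.Icc 1 k, (D ℓ q - D ℓ q' + ε)
            ≤ ∑ ℓ ∈ Finset.Icc 1 k, (if ℓ < T then max (D ℓ q - D ℓ q' + ε) 0 else 0) := by
              apply Finset.sum_le_sum
              intro ℓ _
              by_cases hℓT : ℓ < T
              · simp only [hℓT, if_true]; exact le_max_left _ _
              · simp only [hℓT, if_false]
                have := hsep q' hq' ℓ (not_lt.1 hℓT)
                linarith
          _ = ∑ ℓ ∈ (Finset.Icc 1 k).filter (· < T), max (D ℓ q - D ℓ q' + ε) 0 :=
              (Finset.sum_filter _ _).symm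
          _ ≤ ∑ ℓ ∈ Finset.Icc 1 T, max (D ℓ q - D ℓ q' + ε) 0 := by
              apply Finset.sum_le_sum_of_subset_of_nonneg
              · intro ℓ hℓ
                simp only [Finset.mem_filter, Finset.mem_Icc] at hℓ ⊢
                exact ⟨hℓ.1.1, hℓ.2.le⟩
              · intro ℓ _ _; exact le_max_right _ _
      have h2 : ∑ ℓ ∈ Finset.Icc 1 k, (D ℓ q - D ℓ q' + ε)
          = (S k q - S k q') + ε * k := by
        rw [Finset.sum_add_distrib, Finset.sum_sub_distrib, Finset.sum_const, Nat.card_Icc]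
        simp [hS, mul_comm]
      linarith
    have hre : r k q' = μ₀ q' / μ₀ q * Real.exp (S k q - S k q') := by
      rw [hr, hN]
      simp only
      rw [mul_div_mul_comm, ← Real.exp_sub]
      ring_nf
    rw [hre, hC]
    have := Real.exp_le_exp.2 hSle
    calc μ₀ q' / μ₀ q * Real.exp (S k q - S k q')
        ≤ μ₀ q' / μ₀ q * Real.exp
            ((∑ ℓ ∈ Finset.Icc 1 T, max (D ℓ q - D ℓ q' + ε) 0) - ε * k) := by
          exact mul_le_mul_of_nonneg_left this (le_of_lt (div_pos (hμ₀ q') (hμ₀ q)))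
      _ = μ₀ q' / μ₀ q * Real.exp (∑ ℓ ∈ Finset.Icc 1 T, max (D ℓ q - D ℓ q' + ε) 0)
            * Real.exp (-ε * k) := by
          rw [Real.exp_sub, neg_mul, Real.exp_neg]
          ring
  -- exp(-εk) → 0
  have hexp : Tendsto (fun k : ℕ => Real.exp (-ε * k)) atTop (𝓝 0) := by
    have heq : (fun k : ℕ => Real.exp (-ε * k)) = fun k : ℕ => (Real.exp (-ε)) ^ k := by
      funext k
      rw [← Real.exp_nat_mul]
      ring_nf
    rw [heq]
    exact tendsto_pow_atTop_nhds_zero_of_lt_one (Real.exp_pos _).le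
      (Real.exp_lt_one_iff.2 (neg_neg_of_pos hε))
  -- r k q' → 0 for q' ≠ q
  have hr0 : ∀ q', q' ≠ q → Tendsto (fun k => r k q') atTop (𝓝 0) := by
    intro q' hq'
    apply squeeze_zero (fun k => (div_pos (hNpos k q') (hNpos k q)).le) (key q' hq')
    simpa using hexp.const_mul (C q')
  -- sum of ratios → 1
  have hsum_r : Tendsto (fun k => ∑ q' : Q, r k q') atTop (𝓝 1) := by
    have : Tendsto (fun k => ∑ q' : Q, r k q') atTop
        (𝓝 (∑ q' : Q, if q' = q then (1 : ℝ) else 0)) := by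
      apply tendsto_finset_sum
      intro q' _
      by_cases hq' : q' = q
      · subst hq'
        simp only [if_true]
        have : (fun k => r k q') = fun _ => (1 : ℝ) := by
          funext k; exact div_self (hNpos k q').ne'
        rw [this]; exact tendsto_const_nhds
      · simp only [hq', if_false]; exact hr0 q' hq'
    simpa using this
  -- μ̄_k q = (∑ r)⁻¹
  have hμq : ∀ k, geoMeanProb μ₀ D k q = (∑ q' : Q, r k q')⁻¹ := by
    intro k
    rw [hgeo, hr]
    rw [← Finset.sum_div, inv_div]
  have h1 : Tendsto (fun k => geoMeanProb μ₀ D k q) atTop (𝓝 1) := by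
    have := hsum_r.inv₀ one_ne_zero
    simp only [inv_one] at this
    simpa [hμq] using this
  refine ⟨h1, ?_, ?_⟩
  · intro q' hq'
    have heq : ∀ k, geoMeanProb μ₀ D k q' = r k q' * geoMeanProb μ₀ D k q := by
      intro k
      rw [hgeo, hgeo, hr]
      field_simp [(hNpos k q).ne', (hDen k).ne']
    have := (hr0 q' hq').mul h1
    rw [mul_one] at this
    simpa [heq] using this
  · intro q' hq'
    refine ⟨C q', hCpos q', fun k => ?_⟩
    have heq : geoMeanProb μ₀ D k q' / geoMeanProb μ₀ D k q = r k q' := by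
      rw [hgeo, hgeo, hr]
      rw [div_div_div_comm]
      simp [div_self (hDen k).ne']
    rw [heq]
    exact key q' hq' k
end

section
/- Fix a finite nonempty model set Q and strictly positive prior probabilities μ₀ : Q → ℝ with Σ_{q∈Q} μ₀(q) = 1, and per-step divergence values D_ℓ : Q → ℝ. Define the geometric-mean model probabilities μ̄_k(q) = μ₀(q) exp(−Σ_{ℓ=1}^k D_ℓ(q)) / Σ_{q'∈Q} μ₀(q') exp(−Σ_{ℓ=1}^k D_ℓ(q')). Suppose the true model ∗ ∈ Q satisfies D_ℓ(∗) = 0 for all ℓ and D_ℓ(q) ≥ 0 for all q ∈ Q and all ℓ (nonnegativity of KL divergence, with possibly D_ℓ(q) = 0 infinitely often). Then for every q ≠ ∗ the ratio μ̄_k(q)/μ̄_k(∗) is nonincreasing in k and satisfies μ̄_k(q)/μ̄_k(∗) ≤ μ₀(q)/μ₀(∗); consequently, the geometric-mean probability of the true model is nondecreasing in k and satisfies μ̄_k(∗) ≥ μ₀(∗) for all k, i.e., the posterior model mean probabilities are no worse than their priors. (Corollary: Monotone Consistency.) -/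
open Finset

variable {Q : Type*} [Fintype Q]

/-!
The ratio `μ̄_k(q)/μ̄_k(∗)` is `μ₀(q)/μ₀(∗) · exp(−Σ_{ℓ≤k} D_ℓ(q))`, since the normalizer cancels
and the cumulative divergence of `∗` vanishes; nonnegative divergences make it nonincreasing.
Likewise `μ̄_k(∗) = μ₀(∗)/Z_k`, where the normalizer `Z_k` is nonincreasing. At `k = 0` both
quantities are the prior ones (as `Z_0 = Σ μ₀ = 1`), so monotonicity gives the bounds.
-/

theorem monotone_sum_Icc_one_of_nonneg {f : ℕ → ℝ} (hf : ∀ ℓ, 0 ≤ f ℓ) :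
    Monotone fun k => ∑ ℓ ∈ Icc 1 k, f ℓ := fun _ _ hkm =>
  sum_le_sum_of_subset_of_nonneg (Icc_subset_Icc_right hkm) fun ℓ _ _ => hf ℓ

theorem antitone_exp_neg_sum_Icc_one_of_nonneg {f : ℕ → ℝ} (hf : ∀ ℓ, 0 ≤ f ℓ) :
    Antitone fun k => Real.exp (-∑ ℓ ∈ Icc 1 k, f ℓ) := fun _ _ hkm =>
  Real.exp_le_exp.2 (neg_le_neg (monotone_sum_Icc_one_of_nonneg hf hkm))

noncomputable def geoMeanNormalizer (μ₀ : Q → ℝ) (D : ℕ → Q → ℝ) (k : ℕ) : ℝ :=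
  ∑ q' : Q, μ₀ q' * Real.exp (-∑ ℓ ∈ Icc 1 k, D ℓ q')

section

variable {μ₀ : Q → ℝ} {D : ℕ → Q → ℝ}

theorem geoMeanNormalizer_pos (hμ₀ : ∀ q, 0 < μ₀ q) (q : Q) (k : ℕ) :
    0 < geoMeanNormalizer μ₀ D k :=
  sum_pos (fun q _ => mul_pos (hμ₀ q) (Real.exp_pos _)) ⟨q, mem_univ q⟩

theorem geoMeanNormalizer_antitone (hμ₀ : ∀ q, 0 ≤ μ₀ q) (hD : ∀ q ℓ, 0 ≤ D ℓ q) :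
    Antitone (geoMeanNormalizer μ₀ D) := fun _ _ hkm =>
  sum_le_sum fun q _ => mul_le_mul_of_nonneg_left
    (antitone_exp_neg_sum_Icc_one_of_nonneg (hD q) hkm) (hμ₀ q)

theorem geoMeanProb_eq_div_geoMeanNormalizer (k : ℕ) (q : Q) :
    geoMeanProb μ₀ D k q =
      μ₀ q * Real.exp (-∑ ℓ ∈ Icc 1 k, D ℓ q) / geoMeanNormalizer μ₀ D k :=
  rfl

theorem geoMeanProb_zero (q : Q) : geoMeanProb μ₀ D 0 q = μ₀ q / ∑ q', μ₀ q' := by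
  simp [geoMeanProb]

theorem geoMeanProb_of_forall_eq_zero {qstar : Q} (hstar : ∀ ℓ, D ℓ qstar = 0) (k : ℕ) :
    geoMeanProb μ₀ D k qstar = μ₀ qstar / geoMeanNormalizer μ₀ D k := by
  simp [geoMeanProb_eq_div_geoMeanNormalizer, hstar]

theorem geoMeanProb_div_of_forall_eq_zero {qstar : Q} (hstar : ∀ ℓ, D ℓ qstar = 0)
    (hμ₀ : μ₀ qstar ≠ 0) {k : ℕ} (hZ : geoMeanNormalizer μ₀ D k ≠ 0) (q : Q) :
    geoMeanProb μ₀ D k q / geoMeanProb μ₀ D k qstar =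
      μ₀ q / μ₀ qstar * Real.exp (-∑ ℓ ∈ Icc 1 k, D ℓ q) := by
  rw [geoMeanProb_of_forall_eq_zero hstar, geoMeanProb_eq_div_geoMeanNormalizer]
  field_simp

end

theorem monotone_consistency_static_general
    (μ₀ : Q → ℝ) (hμ₀ : ∀ q, 0 < μ₀ q) (hsum : ∑ q : Q, μ₀ q = 1)
    (D : ℕ → Q → ℝ) (qstar : Q)
    (hstar : ∀ ℓ, D ℓ qstar = 0)
    (hnonneg : ∀ q : Q, ∀ ℓ, 0 ≤ D ℓ q) :
    (∀ q : Q, q ≠ qstar →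
      (Antitone fun k => geoMeanProb μ₀ D k q / geoMeanProb μ₀ D k qstar) ∧
      ∀ k, geoMeanProb μ₀ D k q / geoMeanProb μ₀ D k qstar ≤ μ₀ q / μ₀ qstar) ∧
    (Monotone fun k => geoMeanProb μ₀ D k qstar) ∧
    ∀ k, μ₀ qstar ≤ geoMeanProb μ₀ D k qstar := by
  have hZ k := geoMeanNormalizer_pos (D := D) hμ₀ qstar k
  have hratio_anti q : Antitone fun k => geoMeanProb μ₀ D k q / geoMeanProb μ₀ D k qstar := by
    simp only [geoMeanProb_div_of_forall_eq_zero hstar (hμ₀ qstar).ne' (hZ _).ne']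
    exact (antitone_exp_neg_sum_Icc_one_of_nonneg (hnonneg q)).const_mul
      (div_pos (hμ₀ q) (hμ₀ qstar)).le
  have hstar_mono : Monotone fun k => geoMeanProb μ₀ D k qstar := fun k m hkm => by
    simp only [geoMeanProb_of_forall_eq_zero hstar]
    exact div_le_div_of_nonneg_left (hμ₀ qstar).le (hZ m)
      (geoMeanNormalizer_antitone (fun q => (hμ₀ q).le) hnonneg hkm)
  refine ⟨fun q _ => ⟨hratio_anti q, fun k => ?_⟩, hstar_mono, fun k => ?_⟩
  · calc geoMeanProb μ₀ D k q / geoMeanProb μ₀ D k qstar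
        ≤ geoMeanProb μ₀ D 0 q / geoMeanProb μ₀ D 0 qstar := hratio_anti q k.zero_le
      _ = μ₀ q / μ₀ qstar := by simp only [geoMeanProb_zero, hsum, div_one]
  · calc μ₀ qstar = geoMeanProb μ₀ D 0 qstar := by rw [geoMeanProb_zero, hsum, div_one]
      _ ≤ geoMeanProb μ₀ D k qstar := hstar_mono k.zero_le

/-- **Corollary (Monotone Consistency).** If the true model `∗` has zero per-step divergence
and all divergences are nonnegative (possibly zero infinitely often), then for every `q ≠ ∗`
the ratio `μ̄_k(q)/μ̄_k(∗)` is nonincreasing in `k` and bounded by the prior ratio, and the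
geometric-mean probability of the true model is nondecreasing and no worse than its prior. -/
theorem monotone_consistency_static [Nonempty Q]
    (μ₀ : Q → ℝ) (hμ₀ : ∀ q, 0 < μ₀ q) (hsum : ∑ q : Q, μ₀ q = 1)
    (D : ℕ → Q → ℝ) (qstar : Q)
    (hstar : ∀ ℓ, D ℓ qstar = 0)
    (hnonneg : ∀ q : Q, ∀ ℓ, 0 ≤ D ℓ q) :
    (∀ q : Q, q ≠ qstar →
      (Antitone fun k => geoMeanProb μ₀ D k q / geoMeanProb μ₀ D k qstar) ∧
      ∀ k, geoMeanProb μ₀ D k q / geoMeanProb μ₀ D k qstar ≤ μ₀ q / μ₀ qstar) ∧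
    (Monotone fun k => geoMeanProb μ₀ D k qstar) ∧
    ∀ k, μ₀ qstar ≤ geoMeanProb μ₀ D k qstar :=
  monotone_consistency_static_general μ₀ hμ₀ hsum D qstar hstar hnonneg
end
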